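/- Let P be the orthogonal projection onto a nondegenerate subspace W of an inner product space V, extended as an algebra-grade-wise projection via P(C) = (C ⌟ I_m) I_m⁻¹ where I_m is a unit pseudoscalar of W. Then for vectors v ∈ V: P(v) ∈ W, P(v) = v for v ∈ W, and P(v) = 0 for v orthogonal to W. -/
import Mathlib


open CliffordAlgebra

private lemma stmt_9_aux {R A : Type*} [CommSemiring R] [Semiring A] [Algebra R A] :
    ∀ {n : ℕ} (g : Fin n → A) (c : A) (s : Fin n → R),
      (∀ i, c * g i = s i • (g i * c)) →
      c * (List.ofFn g).prod = (∏ i, s i) • ((List.ofFn g).prod * c) := by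
  intro n
  induction n with
  | zero => intro g c s _; simp
  | succ n ih =>
    intro g c s h
    rw [List.ofFn_succ, List.prod_cons, Fin.prod_univ_succ, ← mul_assoc, h 0,
      smul_mul_assoc, mul_assoc, ih _ c (fun i => s i.succ) (fun i => h i.succ)]
    rw [mul_smul_comm, smul_smul, ← mul_assoc]

/-- Let `θ¹,…,θᵐ` be an orthonormal basis (with signs `±1`) of a nondegenerate
subspace `W` of a real quadratic space `(V,Q)`, `I = θ¹⋯θᵐ` the pseudoscalar
of `W` with `I² = ε·1` (`ε = ±1`, so `I⁻¹ = ε I`), and let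
`P(v) = (v ⌟ I) I⁻¹ = ((1/2)(ι v · I − (−1)ᵐ I · ι v)) (ε I)` be the
projection.  Then `P v` lies in `W`, `P v = v` for `v ∈ W`, and `P v = 0`
for `v` orthogonal to `W`. -/
theorem stmt_9 {V : Type*} [AddCommGroup V] [Module ℝ V]
    (Q : QuadraticForm ℝ V) (m : ℕ) (θ : Fin m → V)
    (horth : ∀ i j, i ≠ j → QuadraticMap.polar Q (θ i) (θ j) = 0)
    (hunit : ∀ i, Q (θ i) = 1 ∨ Q (θ i) = -1)
    (I : CliffordAlgebra Q) (hIdef : I = (List.ofFn fun i => ι Q (θ i)).prod)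
    (ε : ℝ) (hε : ε = 1 ∨ ε = -1) (hI : I * I = ε • (1 : CliffordAlgebra Q))
    (P : V → CliffordAlgebra Q)
    (hPdef : ∀ v : V,
      P v = ((2 : ℝ)⁻¹ • (ι Q v * I - ((-1 : ℝ) ^ m) • (I * ι Q v))) * (ε • I)) :
    (∀ v : V, ∃ w ∈ Submodule.span ℝ (Set.range θ), P v = ι Q w) ∧
    (∀ v ∈ Submodule.span ℝ (Set.range θ), P v = ι Q v) ∧
    (∀ v : V, (∀ i, QuadraticMap.polar Q v (θ i) = 0) → P v = 0) := by
  have hεε : ε * ε = 1 := by rcases hε with h | h <;> rw [h] <;> norm_num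
  have hmulI : ∀ x : CliffordAlgebra Q, (x * I) * (ε • I) = x := by
    intro x
    rw [mul_smul_comm, mul_assoc, hI, mul_smul_comm, mul_one, smul_smul, hεε, one_smul]
  have half : ∀ x : CliffordAlgebra Q, (2 : ℝ)⁻¹ • (x + x) = x := by
    intro x; rw [← two_smul ℝ x, smul_smul]; norm_num
  -- general commutation lemma
  have key : ∀ (v : V) (s : Fin m → ℝ),
      (∀ i, ι Q v * ι Q (θ i) = s i • (ι Q (θ i) * ι Q v)) →
      ι Q v * I = (∏ i, s i) • (I * ι Q v) := by
    intro v s h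
    rw [hIdef]
    exact stmt_9_aux _ _ _ h
  -- commutation for orthogonal vectors
  have horthI : ∀ v : V, (∀ i, QuadraticMap.polar Q v (θ i) = 0) →
      ι Q v * I = ((-1 : ℝ) ^ m) • (I * ι Q v) := by
    intro v hv
    have hk := key v (fun _ => (-1 : ℝ)) (by
      intro i
      have h1 := ι_mul_ι_comm (Q := Q) v (θ i)
      rw [hv i, map_zero, zero_sub] at h1
      rw [neg_one_smul]
      exact h1)
    simpa using hk
  -- commutation for basis vectors
  have hbasis : ∀ j, ((-1 : ℝ) ^ m) • (I * ι Q (θ j)) = -(ι Q (θ j) * I) := by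
    intro j
    have hs : ∀ i, ι Q (θ j) * ι Q (θ i)
        = (if i = j then (1 : ℝ) else -1) • (ι Q (θ i) * ι Q (θ j)) := by
      intro i
      by_cases h : i = j
      · subst h; rw [if_pos rfl, one_smul]
      · rw [if_neg h, neg_one_smul]
        have h1 := ι_mul_ι_comm (Q := Q) (θ j) (θ i)
        rw [horth j i (fun e => h e.symm), map_zero, zero_sub] at h1
        exact h1
    have hp : (∏ i, (if i = j then (1 : ℝ) else -1)) = -(-1 : ℝ) ^ m := by
      rw [← Finset.mul_prod_erase Finset.univ _ (Finset.mem_univ j), if_pos rfl, one_mul,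
        Finset.prod_congr rfl (fun x hx => if_neg (Finset.ne_of_mem_erase hx)),
        Finset.prod_const, Finset.card_erase_of_mem (Finset.mem_univ j), Finset.card_univ,
        Fintype.card_fin]
      obtain ⟨k, rfl⟩ : ∃ k, m = k + 1 := ⟨m - 1, by have := j.isLt; omega⟩
      rw [show k + 1 - 1 = k from rfl, pow_succ]
      ring
    have hk := key (θ j) _ hs
    rw [hp] at hk
    rw [hk, neg_smul, neg_neg]
  -- commutation for all vectors in the span
  have hspan : ∀ w ∈ Submodule.span ℝ (Set.range θ),
      ((-1 : ℝ) ^ m) • (I * ι Q w) = -(ι Q w * I) := by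
    intro w hw
    induction hw using Submodule.span_induction with
    | mem x hx => obtain ⟨j, rfl⟩ := hx; exact hbasis j
    | zero => simp
    | add x y hx hy ihx ihy =>
      rw [map_add, mul_add, add_mul, smul_add, ihx, ihy, neg_add]
    | smul a x hx ihx =>
      rw [map_smul, mul_smul_comm, smul_comm ((-1 : ℝ) ^ m) a, ihx, smul_mul_assoc, smul_neg]
  -- part 2
  have part2 : ∀ v ∈ Submodule.span ℝ (Set.range θ), P v = ι Q v := by
    intro v hv
    rw [hPdef, hspan v hv, sub_neg_eq_add, half, hmulI]
  -- part 3
  have part3 : ∀ v : V, (∀ i, QuadraticMap.polar Q v (θ i) = 0) → P v = 0 := by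
    intro v hv
    rw [hPdef, horthI v hv, sub_self, smul_zero, zero_mul]
  refine ⟨?_, part2, part3⟩
  intro v
  set c : Fin m → ℝ := fun i => (2 : ℝ)⁻¹ * Q (θ i) * QuadraticMap.polar Q v (θ i) with hc
  refine ⟨∑ i, c i • θ i, Submodule.sum_mem _ fun i _ =>
    Submodule.smul_mem _ _ (Submodule.subset_span ⟨i, rfl⟩), ?_⟩
  set w : V := ∑ i, c i • θ i with hwdef
  have hwmem : w ∈ Submodule.span ℝ (Set.range θ) :=
    Submodule.sum_mem _ fun i _ => Submodule.smul_mem _ _ (Submodule.subset_span ⟨i, rfl⟩)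
  have hu : ∀ j, QuadraticMap.polar Q (v - w) (θ j) = 0 := by
    intro j
    rw [QuadraticMap.polar_sub_left]
    have hwp : QuadraticMap.polar Q w (θ j) = QuadraticMap.polar Q v (θ j) := by
      have h1 : QuadraticMap.polar Q w (θ j)
          = ∑ i, c i * QuadraticMap.polar Q (θ i) (θ j) := by
        rw [← QuadraticMap.polarBilin_apply_apply, hwdef, map_sum, LinearMap.sum_apply]
        simp [QuadraticMap.polarBilin_apply_apply]
      rw [h1, Finset.sum_eq_single j
        (fun i _ hij => by rw [horth i j hij, mul_zero])
        (fun h => absurd (Finset.mem_univ j) h)]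
      rw [QuadraticMap.polar_self, hc]
      have hQ2 : Q (θ j) * Q (θ j) = 1 := by rcases hunit j with h | h <;> rw [h] <;> norm_num
      have : (2 : ℕ) • Q (θ j) = 2 * Q (θ j) := by rw [nsmul_eq_mul]; norm_num
      rw [this]
      linear_combination QuadraticMap.polar Q v (θ j) * hQ2
    rw [hwp, sub_self]
  have hι : ι Q v = ι Q w + ι Q (v - w) := by rw [← map_add]; congr 1; abel
  rw [hPdef, hι, add_mul, mul_add, smul_add, hspan w hwmem, ← horthI (v - w) hu]
  have hcollect : (ι Q w * I + ι Q (v - w) * I) - (-(ι Q w * I) + ι Q (v - w) * I)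
      = ι Q w * I + ι Q w * I := by abel
  rw [hcollect, half, hmulI]
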